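/- Antitonicity of the limiting sample count s(λ) (property 2 of s(λ) in the proof of Theorem 4.1): Suppose |r i| ≤ C and 0 ≤ t i ≤ M for all i. For ε > 0 and λ > 0 let Opt(ε, λ) = {i : ι | ∀ j, r i - λ * t i ≥ r j - λ * t j - ε}, let S(ε, λ) = sSup (t '' Opt(ε, λ)), and define s(λ) as the limsup of ε ↦ S(ε, λ) along the filter of neighborhoods of 0 within (0, ∞). Then s is antitone on (0, ∞): for all 0 < λ ≤ λ', s(λ') ≤ s(λ). -/

import Mathlib

open Filter Set Topology

/-!
If `i` is `ε`-optimal at cost `λ'` and `j` is `ε`-optimal at cost `λ < λ'`, adding the two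
optimality inequalities cancels the rewards and leaves `(λ' - λ) (t i - t j) ≤ 2ε`.
Hence `S(ε, λ') ≤ S(ε, λ) + 2ε / (λ' - λ)`, and the error term vanishes in the limsup as `ε → 0⁺`.
The `ε`-optimal sets are nonempty because performance is bounded above, and `S(·, λ)` stays in
`[0, M]`, so no junk value of `sSup` or `limsup` intervenes.
-/

theorem limsup_le_limsup_of_le_add_of_tendsto_zero {α : Type*} {L : Filter α} {f g h : α → ℝ}
    (hfgh : ∀ᶠ x in L, f x ≤ g x + h x) (hh : Tendsto h L (𝓝 0))
    (hf : IsCoboundedUnder (· ≤ ·) L f) (hg : IsBoundedUnder (· ≤ ·) L g) :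
    limsup f L ≤ limsup g L := by
  refine le_of_forall_pos_le_add fun δ hδ => limsup_le_of_le hf ?_
  have hgδ : limsup g L < limsup g L + δ / 2 := by linarith
  filter_upwards [hfgh, eventually_lt_of_limsup_lt hgδ hg,
    hh.eventually (gt_mem_nhds (half_pos hδ))] with x hfx hgx hhx
  linarith

section EpsOptimal

variable {ι : Type*} (r t : ι → ℝ)

def epsOptimalSet (ε lam : ℝ) : Set ι :=
  {i | ∀ j, r i - lam * t i ≥ r j - lam * t j - ε}

variable {r t}

theorem epsOptimalSet_nonempty [Nonempty ι] {ε lam : ℝ} (hε : 0 < ε)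
    (hbdd : BddAbove (range fun i => r i - lam * t i)) :
    (epsOptimalSet r t ε lam).Nonempty := by
  obtain ⟨_, ⟨i, rfl⟩, hi⟩ :=
    exists_lt_of_lt_csSup (range_nonempty fun i => r i - lam * t i) (sub_lt_self _ hε)
  exact ⟨i, fun j => by linarith [le_csSup hbdd (mem_range_self j)]⟩

theorem sub_mul_sub_le_of_mem_epsOptimalSet {ε lam lam' : ℝ} {i j : ι}
    (hi : i ∈ epsOptimalSet r t ε lam') (hj : j ∈ epsOptimalSet r t ε lam) :
    (lam' - lam) * (t i - t j) ≤ 2 * ε := by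
  linarith [hi j, hj i]

theorem sSup_image_epsOptimalSet_le {ε lam lam' : ℝ} (hlam : lam < lam')
    (hne' : (epsOptimalSet r t ε lam').Nonempty) (hne : (epsOptimalSet r t ε lam).Nonempty)
    (ht : BddAbove (range t)) :
    sSup (t '' epsOptimalSet r t ε lam') ≤
      sSup (t '' epsOptimalSet r t ε lam) + 2 * ε / (lam' - lam) := by
  obtain ⟨j, hj⟩ := hne
  refine csSup_le (hne'.image t) ?_
  rintro _ ⟨i, hi, rfl⟩
  have hti : t i - t j ≤ 2 * ε / (lam' - lam) := by
    rw [le_div_iff₀ (sub_pos.2 hlam), mul_comm]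
    exact sub_mul_sub_le_of_mem_epsOptimalSet hi hj
  have htj : t j ≤ sSup (t '' epsOptimalSet r t ε lam) :=
    le_csSup (ht.mono (image_subset_range _ _)) (mem_image_of_mem t hj)
  linarith

end EpsOptimal

/-- Antitonicity of the limiting sample count s(λ)
(property 2 of s(λ) in the proof of Theorem 4.1). -/
theorem limiting_sample_count_antitone {ι : Type*} [Nonempty ι] (r t : ι → ℝ)
    (C M : ℝ) (hr : ∀ i, |r i| ≤ C) (ht0 : ∀ i, 0 ≤ t i) (htM : ∀ i, t i ≤ M)
    (S : ℝ → ℝ → ℝ)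
    (hS : ∀ ε lam : ℝ,
      S ε lam = sSup (t '' {i : ι | ∀ j, r i - lam * t i ≥ r j - lam * t j - ε}))
    (s : ℝ → ℝ)
    (hs : ∀ lam : ℝ,
      s lam = Filter.limsup (fun ε => S ε lam) (nhdsWithin 0 (Set.Ioi 0))) :
    ∀ lam lam' : ℝ, 0 < lam → lam ≤ lam' → s lam' ≤ s lam := by
  intro lam lam' hlam hle
  rcases hle.eq_or_lt with rfl | hlt
  · exact le_rfl
  have hne : ∀ μ, 0 < μ → ∀ ε, 0 < ε → (epsOptimalSet r t ε μ).Nonempty := fun μ hμ ε hε =>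
    epsOptimalSet_nonempty hε ⟨C, by
      rintro _ ⟨i, rfl⟩
      linarith [(abs_le.1 (hr i)).2, mul_nonneg hμ.le (ht0 i)]⟩
  have hpos : ∀ᶠ ε in 𝓝[>] (0 : ℝ), 0 < ε := self_mem_nhdsWithin
  have hM : 0 ≤ M := (ht0 (Classical.arbitrary ι)).trans (htM _)
  have hh : Tendsto (fun ε : ℝ => 2 * ε / (lam' - lam)) (𝓝[>] 0) (𝓝 0) := by
    have := ((tendsto_id (x := 𝓝 (0 : ℝ))).const_mul 2).div_const (lam' - lam)
    simpa using this.mono_left nhdsWithin_le_nhds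
  rw [hs, hs]
  refine limsup_le_limsup_of_le_add_of_tendsto_zero ?_ hh ?_ ?_
  · filter_upwards [hpos] with ε hε
    rw [hS, hS]
    exact sSup_image_epsOptimalSet_le hlt (hne _ (hlam.trans hlt) ε hε) (hne _ hlam ε hε)
      ⟨M, forall_mem_range.2 htM⟩
  · refine (isBoundedUnder_of_eventually_ge (a := 0)
      (Eventually.of_forall fun ε => ?_)).isCoboundedUnder_le
    rw [hS]
    exact Real.sSup_nonneg (by rintro _ ⟨i, -, rfl⟩; exact ht0 i)
  · refine isBoundedUnder_of_eventually_le (a := M) (Eventually.of_forall fun ε => ?_)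
    rw [hS]
    exact Real.sSup_le (by rintro _ ⟨i, -, rfl⟩; exact htM i) hM
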